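/- Let X be a Banach space, G a group of isometric isomorphisms of X, and C ⊆ X* a convex set. If δB_{X*} ∩ C is closed in the G-weak-star topology σ_G(X*, X) for every δ > 0, then C is norm-closed in X*. -/
import Mathlib


/-- The `G`-weak-star topology on the dual of `X`: the topology of pointwise
convergence on the `G`-invariant points of `X`. -/
noncomputable def weakStarGTopology (X : Type*) [NormedAddCommGroup X] [NormedSpace ℝ X]
    (G : Subgroup (X ≃ₗᵢ[ℝ] X)) : TopologicalSpace (X →L[ℝ] ℝ) :=
  ⨅ x : {x : X // ∀ g ∈ G, g x = x},
    TopologicalSpace.induced (fun f : X →L[ℝ] ℝ => f x.1) inferInstance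

/-- If `C ⊆ X*` is convex and `δ B_{X*} ∩ C` is `G`-weak-star closed for every `δ > 0`,
then `C` is norm-closed in `X*`. -/
theorem normClosed_of_inter_balls_weakStarG_closed (X : Type*) [NormedAddCommGroup X]
    [NormedSpace ℝ X] [CompleteSpace X] (G : Subgroup (X ≃ₗᵢ[ℝ] X))
    (C : Set (X →L[ℝ] ℝ)) (hC : Convex ℝ C)
    (h : ∀ δ : ℝ, 0 < δ →
      @IsClosed (X →L[ℝ] ℝ) (weakStarGTopology X G) ({f : X →L[ℝ] ℝ | ‖f‖ ≤ δ} ∩ C)) :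
    IsClosed C := by
  -- The norm topology is finer than the `G`-weak-star topology.
  have hcont : @Continuous (X →L[ℝ] ℝ) (X →L[ℝ] ℝ) _ (weakStarGTopology X G) id := by
    unfold weakStarGTopology
    rw [continuous_iInf_rng]
    intro x
    exact continuous_induced_rng.mpr (ContinuousLinearMap.apply ℝ ℝ x.1).continuous
  have key : ∀ δ : ℝ, 0 < δ → IsClosed ({f : X →L[ℝ] ℝ | ‖f‖ ≤ δ} ∩ C) := by
    intro δ hδ
    have := @IsClosed.preimage _ _ _ (weakStarGTopology X G) id hcont _ (h δ hδ)
    simpa using this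
  rw [← isSeqClosed_iff_isClosed]
  intro u f hu hlim
  have hpos : (0 : ℝ) < ‖f‖ + 1 := by positivity
  have hev : ∀ᶠ n in Filter.atTop, ‖u n‖ < ‖f‖ + 1 :=
    (hlim.norm).eventually_lt_const (by linarith)
  obtain ⟨N, hN⟩ := Filter.eventually_atTop.mp hev
  have hmem : ∀ n, u (n + N) ∈ {g : X →L[ℝ] ℝ | ‖g‖ ≤ ‖f‖ + 1} ∩ C := fun n =>
    ⟨le_of_lt (hN (n + N) (Nat.le_add_left N n)), hu (n + N)⟩
  have hlim' : Filter.Tendsto (fun n => u (n + N)) Filter.atTop (nhds f) :=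
    hlim.comp (Filter.tendsto_add_atTop_nat N)
  exact ((key (‖f‖ + 1) hpos).isSeqClosed hmem hlim').2
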